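/- Let A ∈ B(X) be generalized Drazin invertible. Then X = R(A^d) ⊕ N(A^ⓓA), and B = (A^ⓓ)²A is the unique operator B ∈ B(X) satisfying the two conditions: AB = P_{R(A^d), N(A^ⓓA)} (the idempotent with range R(A^d) and kernel N(A^ⓓA)) and R(B) ⊆ R(A^d). -/

import Mathlib

open ContinuousLinearMap

variable {X Y : Type*}
  [NormedAddCommGroup X] [InnerProductSpace ℂ X] [CompleteSpace X]
  [NormedAddCommGroup Y] [InnerProductSpace ℂ Y] [CompleteSpace Y]

/-- An operator is quasinilpotent if its spectrum equals `{0}`. -/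
def IsQuasinilpotent (T : X →L[ℂ] X) : Prop := spectrum ℂ T = {0}

/-- `B` is the generalized Drazin inverse of `A`. -/
def IsGDrazinInv (A B : X →L[ℂ] X) : Prop :=
  A * B = B * A ∧ B * A * B = B ∧ IsQuasinilpotent (A - A * A * B)

/-- `B` is the Wg-Drazin inverse of `A` (relative to the weight `W`); quasinilpotence of
`A - AWBWA ∈ B(X,Y)` is taken relative to `W`, i.e. `W(A - AWBWA)` is quasinilpotent. -/
def IsWgDrazinInv (W : Y →L[ℂ] X) (A B : X →L[ℂ] Y) : Prop :=
  A ∘L W ∘L B = B ∘L W ∘L A ∧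
  B ∘L W ∘L A ∘L W ∘L B = B ∧
  IsQuasinilpotent (W ∘L (A - A ∘L W ∘L B ∘L W ∘L A))

/-- `P` is the orthogonal projection of the space onto the subspace `S`. -/
def IsOrthoProjOnto (P : X →L[ℂ] X) (S : Submodule ℂ X) : Prop :=
  P * P = P ∧ ContinuousLinearMap.adjoint P = P ∧ LinearMap.range (↑P : X →ₗ[ℂ] X) = S

/-- `P` is the idempotent with range `L` and kernel `M` (i.e. `P = P_{L,M}`). -/
def IsIdempotentOnAlong (P : X →L[ℂ] X) (L M : Submodule ℂ X) : Prop :=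
  P * P = P ∧ LinearMap.range (↑P : X →ₗ[ℂ] X) = L ∧ LinearMap.ker (↑P : X →ₗ[ℂ] X) = M

/-- Given the generalized Drazin inverse `Ad` of `A`, `B` is the core-EP inverse of `A`:
`AB` is the orthogonal projection onto `R(A^d)` and `R(B) ⊆ R(A^d)`. -/
def IsCoreEPInv (A Ad B : X →L[ℂ] X) : Prop :=
  IsOrthoProjOnto (A * B) (LinearMap.range (↑Ad : X →ₗ[ℂ] X)) ∧
    LinearMap.range (↑B : X →ₗ[ℂ] X) ≤ LinearMap.range (↑Ad : X →ₗ[ℂ] X)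

/-- Given the generalized Drazin inverses `WAd` of `WA` and `AWd` of `AW`, `B` is the
weighted core-EP inverse of `A`: `WAWB` is the orthogonal projection onto `R((WA)^d)`
and `R(B) ⊆ R((AW)^d)`. -/
def IsWCoreEPInv (W : Y →L[ℂ] X) (A : X →L[ℂ] Y) (WAd : X →L[ℂ] X) (AWd : Y →L[ℂ] Y)
    (B : X →L[ℂ] Y) : Prop :=
  IsOrthoProjOnto (W ∘L A ∘L W ∘L B) (LinearMap.range (↑WAd : X →ₗ[ℂ] X)) ∧
  LinearMap.range (↑B : X →ₗ[ℂ] Y) ≤ LinearMap.range (↑AWd : Y →ₗ[ℂ] Y)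

/-- `B` is the group inverse of `A`. -/
def IsGroupInv (A B : X →L[ℂ] X) : Prop :=
  A * B = B * A ∧ B * A * B = B ∧ A * B * A = A

/-- `S` is the Moore-Penrose inverse of `T`. -/
def IsMPInv (T : Y →L[ℂ] X) (S : X →L[ℂ] Y) : Prop :=
  T ∘L S ∘L T = T ∧ S ∘L T ∘L S = S ∧
  ContinuousLinearMap.adjoint (T ∘L S) = T ∘L S ∧
  ContinuousLinearMap.adjoint (S ∘L T) = S ∘L T

/-- `C` is the core inverse of `T`: `TC` is the orthogonal projection onto `R(T)`
and `R(C) ⊆ R(T)`. -/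
def IsCoreInv (T C : X →L[ℂ] X) : Prop :=
  IsOrthoProjOnto (T * C) (LinearMap.range (↑T : X →ₗ[ℂ] X)) ∧
    LinearMap.range (↑C : X →ₗ[ℂ] X) ≤ LinearMap.range (↑T : X →ₗ[ℂ] X)


omit [CompleteSpace X] in
lemma range_mul_le' (f g : X →L[ℂ] X) :
    LinearMap.range (↑(f * g) : X →ₗ[ℂ] X) ≤ LinearMap.range (↑f : X →ₗ[ℂ] X) := by
  rintro x ⟨y, rfl⟩
  exact ⟨g y, (ContinuousLinearMap.mul_apply f g y).symm⟩

omit [CompleteSpace X] in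
lemma range_le_of_eq' (f g h : X →L[ℂ] X) (hfg : f * g = h) :
    LinearMap.range (↑h : X →ₗ[ℂ] X) ≤ LinearMap.range (↑f : X →ₗ[ℂ] X) := by
  rw [← hfg]; exact range_mul_le' f g

omit [CompleteSpace X] in
lemma proj_comp_eq' (P T : X →L[ℂ] X) (hP : P * P = P)
    (h : LinearMap.range (↑T : X →ₗ[ℂ] X) ≤ LinearMap.range (↑P : X →ₗ[ℂ] X)) : P * T = T := by
  ext x
  obtain ⟨y, hy⟩ := h ⟨x, rfl⟩
  have hPy := DFunLike.congr_fun hP y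
  simp only [ContinuousLinearMap.mul_apply] at hPy ⊢
  have hy' : P y = T x := hy; rw [← hy', hPy]

omit [CompleteSpace X] in
lemma isCompl_range_ker' (E : X →L[ℂ] X) (hE : E * E = E) :
    IsCompl (LinearMap.range (↑E : X →ₗ[ℂ] X)) (LinearMap.ker (↑E : X →ₗ[ℂ] X)) := by
  constructor
  · rw [disjoint_iff_inf_le]
    rintro x ⟨⟨y, rfl⟩, hker⟩
    have hEy := DFunLike.congr_fun hE y
    simp only [ContinuousLinearMap.mul_apply] at hEy
    have hk : E (E y) = 0 := hker
    have : E y = 0 := by rw [← hEy]; exact hk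
    simpa using this
  · rw [codisjoint_iff]
    refine Submodule.eq_top_iff'.mpr fun x => Submodule.mem_sup.mpr ?_
    refine ⟨E x, ⟨x, rfl⟩, x - E x, ?_, by abel⟩
    have hEx := DFunLike.congr_fun hE x
    simp only [ContinuousLinearMap.mul_apply] at hEx
    simp [LinearMap.mem_ker, map_sub, hEx]

theorem stmt3
    (A Ad : X →L[ℂ] X) (hAd : IsGDrazinInv A Ad)
    (Ace : X →L[ℂ] X) (hAce : IsCoreEPInv A Ad Ace) :
    IsCompl (LinearMap.range (↑Ad : X →ₗ[ℂ] X)) (LinearMap.ker (↑(Ace * A) : X →ₗ[ℂ] X)) ∧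
    ∀ B : X →L[ℂ] X,
      (IsIdempotentOnAlong (A * B) (LinearMap.range (↑Ad : X →ₗ[ℂ] X))
          (LinearMap.ker (↑(Ace * A) : X →ₗ[ℂ] X)) ∧
        LinearMap.range (↑B : X →ₗ[ℂ] X) ≤ LinearMap.range (↑Ad : X →ₗ[ℂ] X)) ↔
        B = Ace * Ace * A := by
  obtain ⟨h1, h2, -⟩ := hAd
  obtain ⟨⟨hPP, -, hPrange⟩, hAceR⟩ := hAce
  have h2' : Ad * (A * Ad) = Ad := by rw [← mul_assoc]; exact h2
  have hQQ : (A * Ad) * (A * Ad) = A * Ad := by rw [mul_assoc, h2']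
  have hQAdEq : (A * Ad) * Ad = Ad := by rw [h1]; exact h2
  have hrangeQ : LinearMap.range (↑(A * Ad) : X →ₗ[ℂ] X) = LinearMap.range (↑Ad : X →ₗ[ℂ] X) := by
    apply le_antisymm
    · rw [h1]; exact range_mul_le' Ad A
    · exact range_le_of_eq' (A * Ad) Ad Ad hQAdEq
  have hPAd : (A * Ace) * Ad = Ad := proj_comp_eq' _ _ hPP hPrange.ge
  have hQAce : (A * Ad) * Ace = Ace :=
    proj_comp_eq' _ _ hQQ (hAceR.trans hrangeQ.ge)
  have hAce1 : Ad * (A * Ace) = Ace := by rw [← mul_assoc, ← h1]; exact hQAce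
  have hAceP : Ace * (A * Ace) = Ace := by
    calc Ace * (A * Ace) = (Ad * (A * Ace)) * (A * Ace) := by rw [hAce1]
      _ = Ad * ((A * Ace) * (A * Ace)) := by rw [mul_assoc]
      _ = Ad * (A * Ace) := by rw [hPP]
      _ = Ace := hAce1
  have hAceAd : Ace * Ad = Ad * Ad := by
    calc Ace * Ad = (Ad * (A * Ace)) * Ad := by rw [hAce1]
      _ = Ad * ((A * Ace) * Ad) := by rw [mul_assoc]
      _ = Ad * Ad := by rw [hPAd]
  have hEAd : (Ace * A) * Ad = Ad := by
    calc (Ace * A) * Ad = Ace * (A * Ad) := by rw [mul_assoc]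
      _ = Ace * (Ad * A) := by rw [h1]
      _ = (Ace * Ad) * A := by rw [mul_assoc]
      _ = (Ad * Ad) * A := by rw [hAceAd]
      _ = Ad * (Ad * A) := by rw [mul_assoc]
      _ = Ad * (A * Ad) := by rw [h1]
      _ = Ad := h2'
  have hE2 : (Ace * A) * (Ace * A) = Ace * A := by
    calc (Ace * A) * (Ace * A) = Ace * (A * (Ace * A)) := by
          rw [mul_assoc Ace A (Ace * A)]
      _ = Ace * ((A * Ace) * A) := by rw [← mul_assoc A Ace A]
      _ = (Ace * (A * Ace)) * A := by rw [← mul_assoc Ace (A * Ace) A]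
      _ = Ace * A := by rw [hAceP]
  have hrangeE : LinearMap.range (↑(Ace * A) : X →ₗ[ℂ] X) = LinearMap.range (↑Ad : X →ₗ[ℂ] X) := by
    apply le_antisymm
    · exact (range_mul_le' Ace A).trans hAceR
    · exact range_le_of_eq' (Ace * A) Ad Ad hEAd
  have hPAce : (A * Ace) * Ace = Ace :=
    proj_comp_eq' _ _ hPP (hAceR.trans hPrange.ge)
  have hAB0 : A * (Ace * Ace * A) = Ace * A := by
    calc A * (Ace * Ace * A) = A * (Ace * (Ace * A)) := by
          rw [mul_assoc Ace Ace A]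
      _ = (A * Ace) * (Ace * A) := by rw [← mul_assoc A Ace (Ace * A)]
      _ = ((A * Ace) * Ace) * A := by rw [← mul_assoc (A * Ace) Ace A]
      _ = Ace * A := by rw [hPAce]
  have hB0r : LinearMap.range (↑(Ace * Ace * A) : X →ₗ[ℂ] X) ≤ LinearMap.range (↑Ad : X →ₗ[ℂ] X) :=
    (range_mul_le' (Ace * Ace) A).trans ((range_mul_le' Ace Ace).trans hAceR)
  refine ⟨?_, ?_⟩
  · rw [← hrangeE]; exact isCompl_range_ker' _ hE2
  · intro B
    constructor
    · rintro ⟨⟨hFi, hFr, hFk⟩, hBr⟩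
      have hEF : (Ace * A) * (A * B) = A * B :=
        proj_comp_eq' _ _ hE2 (hFr.le.trans hrangeE.ge)
      have hFE : A * B = Ace * A := by
        ext x
        have hFix := DFunLike.congr_fun hFi x
        rw [ContinuousLinearMap.mul_apply (A * B) (A * B)] at hFix
        have hxk : x - (A * B) x ∈ LinearMap.ker (↑(A * B) : X →ₗ[ℂ] X) := by
          rw [LinearMap.mem_ker, ContinuousLinearMap.coe_coe, map_sub, hFix, sub_self]
        have hxk' : x - (A * B) x ∈ LinearMap.ker (↑(Ace * A) : X →ₗ[ℂ] X) := hFk ▸ hxk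
        have h00 : (Ace * A) (x - (A * B) x) = 0 := LinearMap.mem_ker.mp hxk'
        rw [map_sub, sub_eq_zero] at h00
        have hEFx := DFunLike.congr_fun hEF x
        rw [ContinuousLinearMap.mul_apply (Ace * A) (A * B)] at hEFx
        show (A * B) x = (Ace * A) x
        rw [h00, hEFx]
      have hBQ : (A * Ad) * B = B :=
        proj_comp_eq' _ _ hQQ (hBr.trans hrangeQ.ge)
      have hB0Q : (A * Ad) * (Ace * Ace * A) = Ace * Ace * A :=
        proj_comp_eq' _ _ hQQ (hB0r.trans hrangeQ.ge)
      calc B = (A * Ad) * B := hBQ.symm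
        _ = (Ad * A) * B := by rw [h1]
        _ = Ad * (A * B) := by rw [mul_assoc Ad A B]
        _ = Ad * (Ace * A) := by rw [hFE]
        _ = Ad * (A * (Ace * Ace * A)) := by rw [hAB0]
        _ = (Ad * A) * (Ace * Ace * A) := by
          rw [← mul_assoc Ad A (Ace * Ace * A)]
        _ = (A * Ad) * (Ace * Ace * A) := by rw [h1]
        _ = Ace * Ace * A := hB0Q
    · rintro rfl
      refine ⟨⟨?_, ?_, ?_⟩, hB0r⟩
      · rw [hAB0]; exact hE2
      · rw [hAB0]; exact hrangeE
      · rw [hAB0]
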